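/- Let $0 < a < 1$ and define $R_0(x,z) = \frac{(1-|x|^2)(1-|z|^2)}{|x-z|^2}$ for $x, z$ in the open unit ball of $\mathbb{R}^n$ with $x \ne z$. Then for every fixed $x$ in the open unit ball and every $\omega$ on the unit sphere, $\lim_{z \to \omega,\ |z|<1} \frac{1}{(1-|z|^2)^a}\cdot \frac{1}{|z-x|^{n-2a}} \int_0^{R_0(x,z)} \frac{t^{a-1}}{(1+t)^{n/2}}\,dt = \frac{1}{a}\cdot \frac{(1-|x|^2)^a}{|x-\omega|^n}$. -/

import Mathlib

/-!
With `R = (1 - ‖x‖²)(1 - ‖z‖²)/‖x - z‖²`, the quantity equals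
`(R⁻ᵃ ∫₀ᴿ tᵃ⁻¹ (1 + t)^(-n/2) dt) · (1 - ‖x‖²)ᵃ / ‖z - x‖ⁿ`. As `z → ω` we have `R → 0⁺`, and
since `(1 + t)^(-n/2)` is squeezed between `(1 + R)^(-n/2)` and `1` on `[0, R]`, the first factor
tends to `∫₀¹ tᵃ⁻¹ dt = 1/a`.
-/

open Metric Filter Topology MeasureTheory intervalIntegral

section IntegralNearZero

variable {a p R : ℝ}

lemma integral_rpow_sub_one (ha : 0 < a) (R : ℝ) : ∫ t in (0 : ℝ)..R, t ^ (a - 1) = R ^ a / a := by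
  rw [integral_rpow (Or.inl (by linarith)), sub_add_cancel, Real.zero_rpow ha.ne', sub_zero]

lemma intervalIntegrable_rpow_div_one_add_rpow (ha : 0 < a) (hp : 0 ≤ p) (hR : 0 ≤ R) :
    IntervalIntegrable (fun t : ℝ => t ^ (a - 1) / (1 + t) ^ p) volume 0 R := by
  refine (intervalIntegrable_rpow' (r := a - 1) (by linarith)).mono_fun
    (by fun_prop : Measurable fun t : ℝ => t ^ (a - 1) / (1 + t) ^ p).aestronglyMeasurable ?_
  rw [Set.uIoc_of_le hR]
  filter_upwards [ae_restrict_mem measurableSet_Ioc] with t ⟨ht, _⟩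
  rw [Real.norm_of_nonneg (by positivity), Real.norm_of_nonneg (by positivity)]
  exact div_le_self (by positivity) (Real.one_le_rpow (by linarith) hp)

lemma integral_rpow_div_one_add_rpow_le (ha : 0 < a) (hp : 0 ≤ p) (hR : 0 ≤ R) :
    ∫ t in (0 : ℝ)..R, t ^ (a - 1) / (1 + t) ^ p ≤ R ^ a / a := by
  rw [← integral_rpow_sub_one ha]
  refine integral_mono_on hR (intervalIntegrable_rpow_div_one_add_rpow ha hp hR)
    (intervalIntegrable_rpow' (by linarith)) fun t ⟨ht, _⟩ => ?_
  exact div_le_self (by positivity) (Real.one_le_rpow (by linarith) hp)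

lemma div_one_add_rpow_le_integral_rpow_div_one_add_rpow (ha : 0 < a) (hp : 0 ≤ p)
    (hR : 0 ≤ R) :
    R ^ a / a / (1 + R) ^ p ≤ ∫ t in (0 : ℝ)..R, t ^ (a - 1) / (1 + t) ^ p := by
  rw [← integral_rpow_sub_one ha, ← intervalIntegral.integral_div]
  refine integral_mono_on hR ((intervalIntegrable_rpow' (by linarith)).div_const _)
    (intervalIntegrable_rpow_div_one_add_rpow ha hp hR) fun t ⟨ht, htR⟩ => ?_
  exact div_le_div_of_nonneg_left (by positivity) (by positivity)
    (Real.rpow_le_rpow (by linarith) (by linarith) hp)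

lemma tendsto_integral_rpow_div_one_add_rpow_div_rpow (ha : 0 < a) (hp : 0 ≤ p) :
    Tendsto (fun R : ℝ => (∫ t in (0 : ℝ)..R, t ^ (a - 1) / (1 + t) ^ p) / R ^ a)
      (𝓝[>] 0) (𝓝 (1 / a)) := by
  have hlower : Tendsto (fun R : ℝ => 1 / a / (1 + R) ^ p) (𝓝[>] 0) (𝓝 (1 / a)) := by
    have hcont : ContinuousAt (fun R : ℝ => 1 / a / (1 + R) ^ p) 0 :=
      continuousAt_const.div ((continuousAt_const.add continuousAt_id).rpow_const (Or.inr hp))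
        (by simp)
    simpa using hcont.tendsto.mono_left nhdsWithin_le_nhds
  refine tendsto_of_tendsto_of_tendsto_of_le_of_le' hlower tendsto_const_nhds ?_ ?_ <;>
    filter_upwards [self_mem_nhdsWithin] with R (hR : 0 < R)
  · rw [le_div_iff₀ (by positivity)]
    calc 1 / a / (1 + R) ^ p * R ^ a = R ^ a / a / (1 + R) ^ p := by ring
      _ ≤ _ := div_one_add_rpow_le_integral_rpow_div_one_add_rpow ha hp hR.le
  · rw [div_le_iff₀ (by positivity)]
    calc _ ≤ R ^ a / a := integral_rpow_div_one_add_rpow_le ha hp hR.le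
      _ = 1 / a * R ^ a := by ring

end IntegralNearZero

lemma tendsto_poisson_ratio_nhdsGT_zero {E : Type*} [NormedAddCommGroup E] {x ω : E}
    (hx : ‖x‖ < 1) (hω : ‖ω‖ = 1) :
    Tendsto (fun z : E => (1 - ‖x‖ ^ 2) * (1 - ‖z‖ ^ 2) / ‖x - z‖ ^ 2)
      (𝓝[ball 0 1 \ {x}] ω) (𝓝[>] 0) := by
  have hxω : ‖x - ω‖ ^ 2 ≠ 0 := by
    have : x ≠ ω := by rintro rfl; linarith
    simpa [sub_eq_zero] using this
  have hcont : ContinuousAt (fun z : E => (1 - ‖x‖ ^ 2) * (1 - ‖z‖ ^ 2) / ‖x - z‖ ^ 2) ω :=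
    (continuousAt_const.mul (by fun_prop)).div (by fun_prop) hxω
  refine tendsto_nhdsWithin_iff.mpr ⟨?_, ?_⟩
  · simpa [hω] using hcont.tendsto.mono_left nhdsWithin_le_nhds
  · filter_upwards [self_mem_nhdsWithin] with z ⟨hz, hzx⟩
    rw [mem_ball_zero_iff] at hz
    have hxz : 0 < ‖x - z‖ := norm_pos_iff.mpr (sub_ne_zero.mpr (Ne.symm hzx))
    have hx2 : 0 < 1 - ‖x‖ ^ 2 := by nlinarith [norm_nonneg x]
    have hz2 : 0 < 1 - ‖z‖ ^ 2 := by nlinarith [norm_nonneg z]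
    exact Set.mem_Ioi.mpr (by positivity)

lemma one_div_rpow_mul_one_div_rpow_mul_eq {A B D : ℝ} (hA : 0 < A) (hB : 0 < B) (hD : 0 < D)
    (a m I : ℝ) :
    1 / B ^ a * (1 / D ^ (m - 2 * a)) * I = I / (A * B / D ^ 2) ^ a * (A ^ a / D ^ m) := by
  have hD2 : (D ^ 2) ^ a = D ^ (2 * a) := by
    rw [← Real.rpow_natCast D 2, ← Real.rpow_mul hD.le, Nat.cast_ofNat]
  rw [Real.div_rpow (by positivity) (by positivity), Real.mul_rpow hA.le hB.le, hD2,
    show D ^ m = D ^ (m - 2 * a) * D ^ (2 * a) by rw [← Real.rpow_add hD, sub_add_cancel]]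
  have := Real.rpow_pos_of_pos hA a
  have := Real.rpow_pos_of_pos hB a
  have := Real.rpow_pos_of_pos hD (2 * a)
  have := Real.rpow_pos_of_pos hD (m - 2 * a)
  field_simp

theorem green_boundary_limit_general (n : ℕ) (a : ℝ) (ha : 0 < a)
    (x : EuclideanSpace ℝ (Fin n)) (hx : x ∈ ball (0 : EuclideanSpace ℝ (Fin n)) 1)
    (ω : EuclideanSpace ℝ (Fin n)) (hω : ω ∈ sphere (0 : EuclideanSpace ℝ (Fin n)) 1) :
    Tendsto
      (fun z : EuclideanSpace ℝ (Fin n) =>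
        (1 / (1 - ‖z‖ ^ 2) ^ a) * (1 / ‖z - x‖ ^ ((n : ℝ) - 2 * a)) *
          ∫ t in (0:ℝ)..((1 - ‖x‖ ^ 2) * (1 - ‖z‖ ^ 2) / ‖x - z‖ ^ 2),
            t ^ (a - 1) / (1 + t) ^ ((n : ℝ) / 2))
      (𝓝[ball (0 : EuclideanSpace ℝ (Fin n)) 1 \ {x}] ω)
      (𝓝 ((1 / a) * ((1 - ‖x‖ ^ 2) ^ a / ‖x - ω‖ ^ (n : ℝ)))) := by
  rw [mem_ball_zero_iff] at hx
  rw [mem_sphere_zero_iff_norm] at hω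
  have hxω : ‖x - ω‖ ≠ 0 := by
    rw [norm_ne_zero_iff, sub_ne_zero]; rintro rfl; linarith
  have hratio := (tendsto_integral_rpow_div_one_add_rpow_div_rpow ha
    (by positivity : (0 : ℝ) ≤ n / 2)).comp (tendsto_poisson_ratio_nhdsGT_zero hx hω)
  have hkernel : Tendsto (fun z => (1 - ‖x‖ ^ 2) ^ a / ‖x - z‖ ^ (n : ℝ))
      (𝓝[ball 0 1 \ {x}] ω) (𝓝 ((1 - ‖x‖ ^ 2) ^ a / ‖x - ω‖ ^ (n : ℝ))) :=
    ((continuousAt_const.div ((continuous_const.sub continuous_id).norm.continuousAt.rpow_const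
      (Or.inl hxω)) (by positivity)).tendsto).mono_left nhdsWithin_le_nhds
  refine (hratio.mul hkernel).congr' ?_
  filter_upwards [self_mem_nhdsWithin] with z ⟨hz, hzx⟩
  rw [mem_ball_zero_iff] at hz
  rw [norm_sub_rev z x]
  exact (one_div_rpow_mul_one_div_rpow_mul_eq (by nlinarith [norm_nonneg x])
    (by nlinarith [norm_nonneg z]) (norm_pos_iff.mpr (sub_ne_zero.mpr (Ne.symm hzx))) _ _ _).symm

theorem green_boundary_limit (n : ℕ) (hn : 2 ≤ n) (a : ℝ) (ha : 0 < a) (ha1 : a < 1)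
    (x : EuclideanSpace ℝ (Fin n)) (hx : x ∈ ball (0 : EuclideanSpace ℝ (Fin n)) 1)
    (ω : EuclideanSpace ℝ (Fin n)) (hω : ω ∈ sphere (0 : EuclideanSpace ℝ (Fin n)) 1) :
    Tendsto
      (fun z : EuclideanSpace ℝ (Fin n) =>
        (1 / (1 - ‖z‖ ^ 2) ^ a) * (1 / ‖z - x‖ ^ ((n : ℝ) - 2 * a)) *
          ∫ t in (0:ℝ)..((1 - ‖x‖ ^ 2) * (1 - ‖z‖ ^ 2) / ‖x - z‖ ^ 2),
            t ^ (a - 1) / (1 + t) ^ ((n : ℝ) / 2))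
      (𝓝[ball (0 : EuclideanSpace ℝ (Fin n)) 1 \ {x}] ω)
      (𝓝 ((1 / a) * ((1 - ‖x‖ ^ 2) ^ a / ‖x - ω‖ ^ (n : ℝ)))) :=
  green_boundary_limit_general n a ha x hx ω hω
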